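/- Let n, m, n_r be natural numbers with m ≤ n and n_r ≤ n, let p ∈ ℂⁿ with p₁,…,p_{n_r} real, let z ∈ ℂᵐ, let μ ≥ 1 be an integer, and let δ ∈ ℝ satisfy δ > -min over all Re(pᵢ) and Re(zⱼ). Define vectors w, v ∈ ℝ^{n+m} by: wᵢ = (pᵢ + δ)^μ for 1 ≤ i ≤ n_r and wᵢ = 0 otherwise; vᵢ = 0 for 1 ≤ i ≤ n_r, vᵢ = |pᵢ + δ|^μ for n_r + 1 ≤ i ≤ n, and v_{n+j} = |zⱼ + δ|^μ for 1 ≤ j ≤ m. Suppose that (1) w weakly majorizes v, and (2) for every integer k with 1 ≤ k ≤ μ - 1, ∑_{i=1}^{n_r} (pᵢ + δ)^k + ∑_{i=n_r+1}^{n} |pᵢ + δ|^k cos(k·arg(pᵢ + δ)) ≥ ∑_{j=1}^{m} |zⱼ + δ|^k cos(k·arg(zⱼ + δ)). Then for every real t ≥ 0, Re(∑_{i=1}^n exp(pᵢ t)) ≥ Re(∑_{j=1}^m exp(zⱼ t)). -/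

import Mathlib

/-- `x` weakly majorizes `y`: for each `k`, the sum of the `k` largest
components of `x` is at least the sum of the `k` largest components of `y`.
Equivalently: for every subset `T`, the sum of `y` over `T` is at most the sum
of `x` over some subset `S` of the same cardinality. -/
def WeakMajorizes {N : ℕ} (x y : Fin N → ℝ) : Prop :=
  ∀ T : Finset (Fin N), ∃ S : Finset (Fin N), S.card = T.card ∧ ∑ i ∈ T, y i ≤ ∑ i ∈ S, x i

section Aux

/-- Layer-cake comparison: weak majorization gives pointwise comparison of
`∑ max (· - s) 0`. -/
lemma wm_layer {N : ℕ} {w v : Fin N → ℝ} (h : WeakMajorizes w v) (s : ℝ) :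
    ∑ i, max (v i - s) 0 ≤ ∑ i, max (w i - s) 0 := by
  classical
  obtain ⟨S, hcard, hle⟩ := h (Finset.univ.filter fun i => s < v i)
  set T := Finset.univ.filter fun i => s < v i with hT
  have e1 : ∑ i, max (v i - s) 0 = ∑ i ∈ T, (v i - s) := by
    rw [← Finset.sum_filter_add_sum_filter_not Finset.univ (fun i => s < v i)
      (fun i => max (v i - s) 0)]
    have h2 : ∑ i ∈ Finset.univ.filter (fun i => ¬ s < v i), max (v i - s) 0 = 0 := by
      refine Finset.sum_eq_zero fun i hi => ?_
      simp only [Finset.mem_filter, not_lt] at hi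
      exact max_eq_right (by linarith [hi.2])
    rw [h2, add_zero]
    refine Finset.sum_congr rfl fun i hi => ?_
    simp only [hT, Finset.mem_filter] at hi
    exact max_eq_left (by linarith [hi.2])
  calc ∑ i, max (v i - s) 0 = ∑ i ∈ T, v i - T.card * s := by
        rw [e1, Finset.sum_sub_distrib, Finset.sum_const, nsmul_eq_mul]
    _ ≤ ∑ i ∈ S, w i - S.card * s := by rw [hcard]; linarith
    _ = ∑ i ∈ S, (w i - s) := by
        rw [Finset.sum_sub_distrib, Finset.sum_const, nsmul_eq_mul]
    _ ≤ ∑ i ∈ S, max (w i - s) 0 :=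
        Finset.sum_le_sum fun i _ => le_max_left _ _
    _ ≤ ∑ i, max (w i - s) 0 :=
        Finset.sum_le_sum_of_subset_of_nonneg (Finset.subset_univ S)
          (fun i _ _ => le_max_right _ _)

lemma layer_intble {r : ℝ} (x : ℝ) (hr : 1 < r) (a b : ℝ) :
    IntervalIntegrable (fun s => max (x - s) 0 * s ^ (r - 2)) MeasureTheory.volume a b := by
  have h1 : IntervalIntegrable (fun s : ℝ => s ^ (r - 2)) MeasureTheory.volume a b :=
    intervalIntegral.intervalIntegrable_rpow' (by linarith)
  exact h1.continuousOn_mul (Continuous.continuousOn (by fun_prop))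

/-- Layer-cake integral representation of `x ^ r`. -/
lemma layer_integral {x M r : ℝ} (hx : 0 ≤ x) (hxM : x ≤ M) (hr : 1 < r) :
    ∫ s in (0:ℝ)..M, max (x - s) 0 * s ^ (r - 2) = x ^ r / (r * (r - 1)) := by
  have hM : 0 ≤ M := le_trans hx hxM
  rcases eq_or_lt_of_le hx with hx0 | hx0
  · -- x = 0
    rw [← hx0]
    have hz : ∫ s in (0:ℝ)..M, max ((0:ℝ) - s) 0 * s ^ (r - 2) = 0 := by
      rw [intervalIntegral.integral_congr (g := fun _ => (0:ℝ))
        (fun s hs => ?_), intervalIntegral.integral_zero]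
      rw [Set.uIcc_of_le hM] at hs
      have : (0:ℝ) - s ≤ 0 := by linarith [hs.1]
      rw [max_eq_right this, zero_mul]
    rw [hz, Real.zero_rpow (by linarith), zero_div]
  -- now 0 < x
  have hInt1 : IntervalIntegrable (fun s : ℝ => x * s ^ (r - 2))
      MeasureTheory.volume 0 x :=
    (intervalIntegral.intervalIntegrable_rpow' (by linarith)).const_mul x
  have hInt2 : IntervalIntegrable (fun s : ℝ => s ^ (r - 1))
      MeasureTheory.volume 0 x :=
    intervalIntegral.intervalIntegrable_rpow' (by linarith)
  have hsplit : ∫ s in (0:ℝ)..M, max (x - s) 0 * s ^ (r - 2)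
      = (∫ s in (0:ℝ)..x, max (x - s) 0 * s ^ (r - 2))
        + ∫ s in x..M, max (x - s) 0 * s ^ (r - 2) := by
    rw [intervalIntegral.integral_add_adjacent_intervals (layer_intble x hr 0 x)
      (layer_intble x hr x M)]
  have hright : (∫ s in x..M, max (x - s) 0 * s ^ (r - 2)) = 0 := by
    rw [intervalIntegral.integral_congr (g := fun _ => (0:ℝ)) (fun s hs => ?_),
      intervalIntegral.integral_zero]
    rw [Set.uIcc_of_le hxM] at hs
    have : x - s ≤ 0 := by linarith [hs.1]
    rw [max_eq_right this, zero_mul]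
  have hleft : (∫ s in (0:ℝ)..x, max (x - s) 0 * s ^ (r - 2))
      = ∫ s in (0:ℝ)..x, (x * s ^ (r - 2) - s ^ (r - 1)) := by
    refine intervalIntegral.integral_congr_ae (MeasureTheory.ae_of_all _ fun s hs => ?_)
    rw [Set.uIoc_of_le (le_of_lt hx0)] at hs
    have hs0 : 0 < s := hs.1
    have hsx : s ≤ x := hs.2
    have hmax : max (x - s) 0 = x - s := max_eq_left (by linarith)
    have hpow : s ^ (r - 1) = s * s ^ (r - 2) := by
      nth_rewrite 2 [← Real.rpow_one s]
      rw [← Real.rpow_add hs0]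
      congr 1; ring
    rw [hmax, hpow]; ring
  have hv1 : (∫ s in (0:ℝ)..x, x * s ^ (r - 2)) = x * (x ^ (r-1) / (r-1)) := by
    rw [intervalIntegral.integral_const_mul, integral_rpow (Or.inl (by linarith))]
    rw [Real.zero_rpow (by intro hc; linarith : r - 2 + 1 ≠ 0)]
    have he : r - 2 + 1 = r - 1 := by ring
    rw [he]; ring
  have hv2 : (∫ s in (0:ℝ)..x, s ^ (r - 1)) = x ^ r / r := by
    rw [integral_rpow (Or.inl (by linarith))]
    rw [Real.zero_rpow (by intro hc; linarith : r - 1 + 1 ≠ 0)]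
    have he : r - 1 + 1 = r := by ring
    rw [he]; ring
  rw [hsplit, hright, hleft, intervalIntegral.integral_sub hInt1 hInt2, hv1, hv2]
  have hxr : x * x ^ (r - 1) = x ^ r := by
    nth_rewrite 1 [← Real.rpow_one x]
    rw [← Real.rpow_add hx0]
    norm_num
  have h1 : r - 1 ≠ 0 := by intro hc; linarith
  have h2 : r ≠ 0 := by intro hc; linarith
  rw [mul_div_assoc', hxr]
  field_simp
  ring

/-- Weak majorization of nonnegative vectors is preserved by `x ↦ x ^ r`, `r ≥ 1`,
at the level of sums. -/
lemma maj_rpow {N : ℕ} {w v : Fin N → ℝ} (hw : ∀ i, 0 ≤ w i) (hv : ∀ i, 0 ≤ v i)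
    (h : WeakMajorizes w v) {r : ℝ} (hr : 1 ≤ r) :
    ∑ i, v i ^ r ≤ ∑ i, w i ^ r := by
  classical
  rcases eq_or_lt_of_le hr with hr1 | hr1
  · -- r = 1
    rw [← hr1]
    simp only [Real.rpow_one]
    obtain ⟨S, hcard, hle⟩ := h Finset.univ
    have : S = Finset.univ := Finset.eq_univ_of_card S (by simpa using hcard)
    rwa [this] at hle
  · set M := 1 + ∑ i, (v i + w i) with hMdef
    have hsum_nonneg : 0 ≤ ∑ i, (v i + w i) :=
      Finset.sum_nonneg fun i _ => by linarith [hw i, hv i]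
    have hMv : ∀ i, v i ≤ M := by
      intro i
      have h1 : v i + w i ≤ ∑ j, (v j + w j) :=
        Finset.single_le_sum (f := fun j => v j + w j)
          (fun j _ => add_nonneg (hv j) (hw j)) (Finset.mem_univ i)
      have := hw i; simp only [hMdef]; linarith
    have hMw : ∀ i, w i ≤ M := by
      intro i
      have h1 : v i + w i ≤ ∑ j, (v j + w j) :=
        Finset.single_le_sum (f := fun j => v j + w j)
          (fun j _ => add_nonneg (hv j) (hw j)) (Finset.mem_univ i)
      have := hv i; simp only [hMdef]; linarith
    have hrr : 0 < r * (r - 1) := mul_pos (by linarith) (by linarith)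
    have keyv : ∑ i, v i ^ r
        = (r * (r-1)) * ∫ s in (0:ℝ)..M, (∑ i, max (v i - s) 0 * s ^ (r - 2)) := by
      rw [intervalIntegral.integral_finset_sum (fun i _ => layer_intble (v i) hr1 0 M)]
      rw [Finset.mul_sum]
      refine Finset.sum_congr rfl fun i _ => ?_
      rw [layer_integral (hv i) (hMv i) hr1]
      field_simp
    have keyw : ∑ i, w i ^ r
        = (r * (r-1)) * ∫ s in (0:ℝ)..M, (∑ i, max (w i - s) 0 * s ^ (r - 2)) := by
      rw [intervalIntegral.integral_finset_sum (fun i _ => layer_intble (w i) hr1 0 M)]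
      rw [Finset.mul_sum]
      refine Finset.sum_congr rfl fun i _ => ?_
      rw [layer_integral (hw i) (hMw i) hr1]
      field_simp
    rw [keyv, keyw]
    refine mul_le_mul_of_nonneg_left ?_ (le_of_lt hrr)
    have hIv : IntervalIntegrable (fun s => ∑ i, max (v i - s) 0 * s ^ (r - 2))
        MeasureTheory.volume 0 M := by
      have hI := IntervalIntegrable.sum (f := fun i s => max (v i - s) 0 * s ^ (r - 2))
        Finset.univ (fun i _ => layer_intble (v i) hr1 0 M)
      have he : (∑ i : Fin N, fun s => max (v i - s) 0 * s ^ (r - 2))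
          = fun s => ∑ i : Fin N, max (v i - s) 0 * s ^ (r - 2) := by
        funext s; rw [Finset.sum_apply]
      rwa [he] at hI
    have hIw : IntervalIntegrable (fun s => ∑ i, max (w i - s) 0 * s ^ (r - 2))
        MeasureTheory.volume 0 M := by
      have hI := IntervalIntegrable.sum (f := fun i s => max (w i - s) 0 * s ^ (r - 2))
        Finset.univ (fun i _ => layer_intble (w i) hr1 0 M)
      have he : (∑ i : Fin N, fun s => max (w i - s) 0 * s ^ (r - 2))
          = fun s => ∑ i : Fin N, max (w i - s) 0 * s ^ (r - 2) := by
        funext s; rw [Finset.sum_apply]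
      rwa [he] at hI
    have hM0 : (0:ℝ) ≤ M := by linarith
    refine intervalIntegral.integral_mono_on hM0 hIv hIw (fun s hs => ?_)
    rw [← Finset.sum_mul, ← Finset.sum_mul]
    exact mul_le_mul_of_nonneg_right (wm_layer h s) (Real.rpow_nonneg hs.1 _)

lemma re_pow_eq (ζ : ℂ) (k : ℕ) :
    ((ζ ^ k).re) = ‖ζ‖ ^ k * Real.cos (k * Complex.arg ζ) := by
  conv_lhs => rw [← Complex.norm_mul_exp_arg_mul_I ζ]
  rw [mul_pow, ← Complex.exp_nat_mul]
  have hc : (k : ℂ) * (↑ζ.arg * Complex.I) = ↑((k : ℝ) * ζ.arg) * Complex.I := by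
    push_cast; ring
  rw [hc, ← Complex.ofReal_pow, Complex.re_ofReal_mul, Complex.exp_ofReal_mul_I_re]

lemma pow_mu_rpow {a : ℝ} (ha : 0 ≤ a) {μ k : ℕ} (hμ : μ ≠ 0) :
    (a ^ μ : ℝ) ^ ((k : ℝ) / (μ : ℝ)) = a ^ k := by
  rw [← Real.rpow_natCast a μ, ← Real.rpow_natCast a k, ← Real.rpow_mul ha]
  congr 1
  field_simp

end Aux

/-- Corollary 1: complex zeros and poles, strictly proper case.
With `w` collecting the shifted real poles raised to the power `μ` and `v` the
moduli of the shifted complex poles and of all shifted zeros raised to the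
power `μ`, if `w ≻_w v` and the trigonometric power-sum inequalities hold for
`k = 1, …, μ - 1`, then `Re(∑ exp(pᵢ t)) ≥ Re(∑ exp(zⱼ t))` for all `t ≥ 0`. -/
theorem stmt_7 (n m n_r : ℕ) (hm : m ≤ n) (hnr : n_r ≤ n)
    (p : Fin n → ℂ) (z : Fin m → ℂ)
    (hreal : ∀ i : Fin n, (i : ℕ) < n_r → (p i).im = 0)
    (μ : ℕ) (hμ : 1 ≤ μ) (δ : ℝ)
    (hp : ∀ i, 0 < (p i).re + δ) (hz : ∀ j, 0 < (z j).re + δ)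
    (w v : Fin (n + m) → ℝ)
    (hw : ∀ i : Fin (n + m),
      w i = if h : (i : ℕ) < n_r then ((p ⟨i, lt_of_lt_of_le h hnr⟩).re + δ) ^ μ else 0)
    (hv : ∀ i : Fin (n + m),
      v i = if (i : ℕ) < n_r then 0
        else if h : (i : ℕ) < n then ‖p ⟨i, h⟩ + (δ : ℂ)‖ ^ μ
        else ‖z ⟨(i : ℕ) - n, by have := i.isLt; omega⟩ + (δ : ℂ)‖ ^ μ)
    (h1 : WeakMajorizes w v)
    (h2 : ∀ k : ℕ, 1 ≤ k → k ≤ μ - 1 →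
      ∑ j, ‖z j + (δ : ℂ)‖ ^ k * Real.cos (k * Complex.arg (z j + (δ : ℂ))) ≤
      (∑ i ∈ Finset.univ.filter (fun i : Fin n => (i : ℕ) < n_r), ((p i).re + δ) ^ k) +
      ∑ i ∈ Finset.univ.filter (fun i : Fin n => n_r ≤ (i : ℕ)),
        ‖p i + (δ : ℂ)‖ ^ k * Real.cos (k * Complex.arg (p i + (δ : ℂ)))) :
    ∀ t : ℝ, 0 ≤ t →
      (∑ j, Complex.exp (z j * t)).re ≤ (∑ i, Complex.exp (p i * t)).re := by
  classical
  have hpreal : ∀ i : Fin n, (i : ℕ) < n_r → p i + (δ : ℂ) = (((p i).re + δ : ℝ) : ℂ) := by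
    intro i hi
    apply Complex.ext <;> simp [hreal i hi]
  -- The key coefficientwise inequality.
  have key : ∀ k : ℕ,
      ∑ j, ((z j + (δ : ℂ)) ^ k).re ≤ ∑ i, ((p i + (δ : ℂ)) ^ k).re := by
    intro k
    rcases Nat.eq_zero_or_pos k with hk0 | hk1
    · subst hk0
      simp only [pow_zero, Complex.one_re, Finset.sum_const, Finset.card_univ,
        Fintype.card_fin, nsmul_eq_mul, mul_one]
      exact_mod_cast hm
    rcases lt_or_ge k μ with hkμ | hkμ
    · -- 1 ≤ k ≤ μ - 1 : use h2
      have hk2 : k ≤ μ - 1 := by omega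
      have H := h2 k hk1 hk2
      have hsplit : ∑ i, ((p i + (δ : ℂ)) ^ k).re
          = (∑ i ∈ Finset.univ.filter (fun i : Fin n => (i : ℕ) < n_r), ((p i).re + δ) ^ k) +
            ∑ i ∈ Finset.univ.filter (fun i : Fin n => n_r ≤ (i : ℕ)),
              ‖p i + (δ : ℂ)‖ ^ k * Real.cos (k * Complex.arg (p i + (δ : ℂ))) := by
        rw [← Finset.sum_filter_add_sum_filter_not Finset.univ
          (fun i : Fin n => (i : ℕ) < n_r) (fun i => ((p i + (δ : ℂ)) ^ k).re)]
        congr 1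
        · refine Finset.sum_congr rfl fun i hi => ?_
          simp only [Finset.mem_filter] at hi
          rw [hpreal i hi.2, ← Complex.ofReal_pow, Complex.ofReal_re]
        · simp only [not_lt]
          exact Finset.sum_congr rfl fun i _ => re_pow_eq _ k
      rw [hsplit]
      calc ∑ j, ((z j + (δ : ℂ)) ^ k).re
          = ∑ j, ‖z j + (δ : ℂ)‖ ^ k
              * Real.cos (k * Complex.arg (z j + (δ : ℂ))) :=
            Finset.sum_congr rfl fun j _ => re_pow_eq _ k
        _ ≤ _ := H
    · -- k ≥ μ : use majorization
      set r : ℝ := (k : ℝ) / (μ : ℝ) with hrdef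
      have hμ0 : (μ : ℝ) ≠ 0 := Nat.cast_ne_zero.mpr (by omega)
      have hμ0' : μ ≠ 0 := by omega
      have hr1 : 1 ≤ r := by
        rw [hrdef, le_div_iff₀ (by positivity)]
        simp only [one_mul]
        exact_mod_cast hkμ
      have hr0 : r ≠ 0 := by intro hc; rw [hc] at hr1; linarith
      have hwnn : ∀ i, 0 ≤ w i := by
        intro i; rw [hw i]
        split
        · exact le_of_lt (pow_pos (hp _) μ)
        · exact le_refl 0
      have hvnn : ∀ i, 0 ≤ v i := by
        intro i; rw [hv i]
        split
        · exact le_refl 0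
        · split <;> positivity
      have maj := maj_rpow hwnn hvnn h1 hr1
      -- compute both sides of `maj`
      have hwsum : ∑ i : Fin (n + m), w i ^ r
          = ∑ i : Fin n, (if (i : ℕ) < n_r then ((p i).re + δ) ^ k else 0) := by
        rw [Fin.sum_univ_add (f := fun i : Fin (n + m) => w i ^ r)]
        have h2nd : ∑ j : Fin m, w (Fin.natAdd n j) ^ r = 0 := by
          refine Finset.sum_eq_zero fun j _ => ?_
          rw [hw]
          have hnot : ¬ ((Fin.natAdd n j : ℕ) < n_r) := by
            simp only [Fin.coe_natAdd]; omega
          rw [dif_neg hnot, Real.zero_rpow hr0]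
        rw [h2nd, add_zero]
        refine Finset.sum_congr rfl fun i _ => ?_
        rw [hw]
        by_cases hi : (i : ℕ) < n_r
        · have hci : ((Fin.castAdd m i : Fin (n + m)) : ℕ) < n_r := by
            simpa using hi
          rw [dif_pos hci, pow_mu_rpow (le_of_lt (hp _)) hμ0', if_pos hi]
          have he : (⟨((Fin.castAdd m i : Fin (n + m)) : ℕ),
              lt_of_lt_of_le hci hnr⟩ : Fin n) = i := by
            apply Fin.ext; simp
          rw [he]
        · have hci : ¬ ((Fin.castAdd m i : Fin (n + m)) : ℕ) < n_r := by
            simpa using hi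
          rw [dif_neg hci, Real.zero_rpow hr0, if_neg hi]
      have hvsum : ∑ i : Fin (n + m), v i ^ r
          = (∑ i : Fin n, (if (i : ℕ) < n_r then 0
              else ‖p i + (δ : ℂ)‖ ^ k))
            + ∑ j : Fin m, ‖z j + (δ : ℂ)‖ ^ k := by
        rw [Fin.sum_univ_add (f := fun i : Fin (n + m) => v i ^ r)]
        congr 1
        · refine Finset.sum_congr rfl fun i _ => ?_
          rw [hv]
          by_cases hi : (i : ℕ) < n_r
          · have hci : ((Fin.castAdd m i : Fin (n + m)) : ℕ) < n_r := by simpa using hi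
            rw [if_pos hci, Real.zero_rpow hr0, if_pos hi]
          · have hci : ¬ ((Fin.castAdd m i : Fin (n + m)) : ℕ) < n_r := by simpa using hi
            have hlt : ((Fin.castAdd m i : Fin (n + m)) : ℕ) < n := by simp
            rw [if_neg hci, dif_pos hlt, pow_mu_rpow (norm_nonneg _) hμ0',
              if_neg hi]
            have he : (⟨((Fin.castAdd m i : Fin (n + m)) : ℕ), hlt⟩ : Fin n) = i := by
              apply Fin.ext; simp
            rw [he]
        · refine Finset.sum_congr rfl fun j _ => ?_
          rw [hv]
          have hge : ¬ ((Fin.natAdd n j : Fin (n + m)) : ℕ) < n_r := by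
            simp only [Fin.coe_natAdd]; omega
          have hge2 : ¬ ((Fin.natAdd n j : Fin (n + m)) : ℕ) < n := by
            simp only [Fin.coe_natAdd]; omega
          rw [if_neg hge, dif_neg hge2, pow_mu_rpow (norm_nonneg _) hμ0']
          have he : (⟨((Fin.natAdd n j : Fin (n + m)) : ℕ) - n, by
              have := (Fin.natAdd n j).isLt; omega⟩ : Fin m) = j := by
            apply Fin.ext; simp
          rw [he]
      rw [hwsum, hvsum] at maj
      -- bound both sides by absolute values
      have hC : ∑ j, ((z j + (δ : ℂ)) ^ k).re ≤ ∑ j, ‖z j + (δ : ℂ)‖ ^ k := by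
        refine Finset.sum_le_sum fun j _ => ?_
        calc ((z j + (δ : ℂ)) ^ k).re ≤ ‖(z j + (δ : ℂ)) ^ k‖ :=
              Complex.re_le_norm _
          _ = ‖z j + (δ : ℂ)‖ ^ k := norm_pow _ _
      have hB : ∑ i : Fin n, ((if (i : ℕ) < n_r then ((p i).re + δ) ^ k else 0)
            - (if (i : ℕ) < n_r then 0 else ‖p i + (δ : ℂ)‖ ^ k))
          ≤ ∑ i, ((p i + (δ : ℂ)) ^ k).re := by
        refine Finset.sum_le_sum fun i _ => ?_
        by_cases hi : (i : ℕ) < n_r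
        · rw [if_pos hi, if_pos hi, sub_zero, hpreal i hi, ← Complex.ofReal_pow,
            Complex.ofReal_re]
        · rw [if_neg hi, if_neg hi, zero_sub]
          have h3 : ‖(p i + (δ : ℂ)) ^ k‖ = ‖p i + (δ : ℂ)‖ ^ k :=
            norm_pow _ _
          have h4 := abs_le.mp (Complex.abs_re_le_norm ((p i + (δ : ℂ)) ^ k))
          rw [h3] at h4
          exact h4.1
      rw [Finset.sum_sub_distrib] at hB
      linarith
  -- Now the analytic part.
  intro t ht
  have reduce : ∀ {l : ℕ} (f : Fin l → ℂ),
      (∑ j, Complex.exp (f j * t)).re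
        = Real.exp (-(δ * t)) * ∑ j, (Complex.exp ((f j + δ) * t)).re := by
    intro l f
    rw [Complex.re_sum, Finset.mul_sum]
    refine Finset.sum_congr rfl fun j _ => ?_
    have he : f j * t = ↑(-(δ * t)) + (f j + δ) * t := by push_cast; ring
    rw [he, Complex.exp_add, ← Complex.ofReal_exp, Complex.re_ofReal_mul]
  rw [reduce z, reduce p]
  refine mul_le_mul_of_nonneg_left ?_ (Real.exp_pos _).le
  have hsummable : ∀ ζ : ℂ, Summable fun k : ℕ => (ζ ^ k).re / k.factorial := by
    intro ζ
    refine Summable.of_abs ?_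
    refine Summable.of_nonneg_of_le (fun k => abs_nonneg _) (fun k => ?_)
      (Real.summable_pow_div_factorial ‖ζ‖)
    rw [abs_div, abs_of_nonneg (by positivity : (0:ℝ) ≤ (k.factorial : ℝ))]
    have h5 : |(ζ ^ k).re| ≤ ‖ζ‖ ^ k := by
      calc |(ζ ^ k).re| ≤ ‖ζ ^ k‖ := Complex.abs_re_le_norm _
        _ = ‖ζ‖ ^ k := norm_pow _ _
    gcongr
  have hre : ∀ ζ : ℂ, (Complex.exp ζ).re = ∑' k : ℕ, (ζ ^ k).re / k.factorial := by
    intro ζ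
    rw [Complex.exp_eq_exp_ℂ, NormedSpace.exp_eq_tsum_div]
    rw [← Complex.reCLM_apply,
      ContinuousLinearMap.map_tsum _ (NormedSpace.expSeries_div_summable ζ)]
    refine tsum_congr fun k => ?_
    rw [Complex.reCLM_apply]
    have hcast : ((k.factorial : ℂ)) = ((k.factorial : ℝ) : ℂ) := by push_cast; ring
    rw [hcast, Complex.div_ofReal_re]
  have termwise : ∀ k : ℕ,
      ∑ j, (((z j + δ) * t) ^ k).re / k.factorial
        ≤ ∑ i, (((p i + δ) * t) ^ k).re / k.factorial := by
    intro k
    have e : ∀ ζ : ℂ, ((ζ * t) ^ k).re = (ζ ^ k).re * t ^ k := by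
      intro ζ
      rw [mul_pow]
      have hc : ((t : ℂ)) ^ k = ((t ^ k : ℝ) : ℂ) := by push_cast; ring
      rw [hc, mul_comm, Complex.re_ofReal_mul]
      ring
    simp only [e, div_eq_mul_inv]
    rw [← Finset.sum_mul, ← Finset.sum_mul, ← Finset.sum_mul, ← Finset.sum_mul]
    have htk : (0:ℝ) ≤ t ^ k := by positivity
    have hfk : (0:ℝ) ≤ ((k.factorial : ℝ))⁻¹ := by positivity
    exact mul_le_mul_of_nonneg_right
      (mul_le_mul_of_nonneg_right (key k) htk) hfk
  calc ∑ j, (Complex.exp ((z j + δ) * t)).re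
      = ∑' k : ℕ, ∑ j, (((z j + δ) * t) ^ k).re / k.factorial := by
        simp only [hre]
        exact (Summable.tsum_finsetSum fun j _ => hsummable _).symm
    _ ≤ ∑' k : ℕ, ∑ i, (((p i + δ) * t) ^ k).re / k.factorial :=
        Summable.tsum_le_tsum termwise (summable_sum fun j _ => hsummable _)
          (summable_sum fun i _ => hsummable _)
    _ = ∑ i, (Complex.exp ((p i + δ) * t)).re := by
        simp only [hre]
        exact Summable.tsum_finsetSum fun i _ => hsummable _
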